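/- arXiv:1510.03394 — 8 statements merged into one kernel-verified Lean document; each statement's English description precedes it below -/
import Mathlib

section
/- Let θ ∈ (0, π/2), let β = 2cos(2θ)/√(1+sin²(2θ)), and let μ ∈ (0, π/2) satisfy tan μ = sin(2θ). With the two-qubit state ψ(θ) and the observables A₀ = cos(μ)σz + sin(μ)σx, A₁ = cos(μ)σz − sin(μ)σx, B₀ = σz, B₁ = σx, the Bell expression satisfies I_{1,β} = β⟨1⊗B₀⟩ + ⟨A₀⊗B₀⟩ + ⟨A₁⊗B₀⟩ + ⟨A₀⊗B₁⟩ − ⟨A₁⊗B₁⟩ = √(2(4+β²)) (equivalently 2√2·√(1+β²/4)), the maximal quantum value of the inequality I_{1,β}. -/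
noncomputable section

open Matrix Kronecker

/-- Pauli matrix σz. -/
def sigmaZ : Matrix (Fin 2) (Fin 2) ℂ := !![1, 0; 0, -1]

/-- Pauli matrix σx. -/
def sigmaX : Matrix (Fin 2) (Fin 2) ℂ := !![0, 1; 1, 0]

/-- The two-qubit state ψ(θ) = cos θ |00⟩ + sin θ |11⟩. -/
def psiState (θ : ℝ) : Fin 2 × Fin 2 → ℂ := fun p =>
  if p = (0, 0) then (Real.cos θ : ℂ)
  else if p = (1, 1) then (Real.sin θ : ℂ) else 0

/-- Two-qubit expectation value ⟨A ⊗ B⟩ in state ψ. -/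
def expVal (A B : Matrix (Fin 2) (Fin 2) ℂ) (ψ : Fin 2 × Fin 2 → ℂ) : ℂ :=
  star ψ ⬝ᵥ ((A ⊗ₖ B).mulVec ψ)

lemma expVal_sigmaZ (θ : ℝ) (A : Matrix (Fin 2) (Fin 2) ℂ) :
    expVal A sigmaZ (psiState θ) =
      A 0 0 * (Real.cos θ : ℂ) ^ 2 - A 1 1 * (Real.sin θ : ℂ) ^ 2 := by
  simp [expVal, dotProduct, Matrix.mulVec, Fintype.sum_prod_type, Fin.sum_univ_two,
    Matrix.kroneckerMap_apply, sigmaZ, psiState, Prod.ext_iff, Complex.conj_ofReal,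
    -Complex.ofReal_cos, -Complex.ofReal_sin]
  ring

lemma expVal_sigmaX (θ : ℝ) (A : Matrix (Fin 2) (Fin 2) ℂ) :
    expVal A sigmaX (psiState θ) =
      (A 0 1 + A 1 0) * ((Real.cos θ : ℂ) * (Real.sin θ : ℂ)) := by
  simp [expVal, dotProduct, Matrix.mulVec, Fintype.sum_prod_type, Fin.sum_univ_two,
    Matrix.kroneckerMap_apply, sigmaX, psiState, Prod.ext_iff, Complex.conj_ofReal,
    -Complex.ofReal_cos, -Complex.ofReal_sin]
  ring

lemma expVal_one_sigmaZ (θ : ℝ) :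
    expVal 1 sigmaZ (psiState θ) = (Real.cos θ : ℂ) ^ 2 - (Real.sin θ : ℂ) ^ 2 := by
  simp [expVal, dotProduct, Matrix.mulVec, Fintype.sum_prod_type, Fin.sum_univ_two,
    Matrix.kroneckerMap_apply, sigmaZ, psiState, Prod.ext_iff, Complex.conj_ofReal,
    Matrix.one_apply, -Complex.ofReal_cos, -Complex.ofReal_sin]
  ring

lemma key_real_identity (θ β μ : ℝ)
    (hβ : β = 2 * Real.cos (2 * θ) / Real.sqrt (1 + Real.sin (2 * θ) ^ 2))
    (hμ : μ ∈ Set.Ioo 0 (Real.pi / 2))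
    (htan : Real.tan μ = Real.sin (2 * θ)) :
    β * (Real.cos θ ^ 2 - Real.sin θ ^ 2) + 2 * Real.cos μ
      + 4 * Real.sin μ * Real.cos θ * Real.sin θ = Real.sqrt (2 * (4 + β ^ 2)) := by
  set s := Real.sin (2 * θ) with hs
  set c := Real.cos (2 * θ) with hc
  set r := Real.sqrt (1 + s ^ 2) with hrdef
  have hpyth : s ^ 2 + c ^ 2 = 1 := Real.sin_sq_add_cos_sq _
  have hr : 0 < r := Real.sqrt_pos.mpr (by positivity)
  have hr2 : r ^ 2 = 1 + s ^ 2 := Real.sq_sqrt (by positivity)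
  have hcosμ : 0 < Real.cos μ := Real.cos_pos_of_mem_Ioo
    ⟨by linarith [hμ.1, Real.pi_pos], hμ.2⟩
  have hsinμ : Real.sin μ = s * Real.cos μ := by
    rw [← htan, Real.tan_eq_sin_div_cos]; field_simp
  have hpm : Real.sin μ ^ 2 + Real.cos μ ^ 2 = 1 := Real.sin_sq_add_cos_sq μ
  have h1 : Real.cos μ * r = 1 := by
    have hsq : (Real.cos μ * r) ^ 2 = 1 := by
      linear_combination Real.cos μ ^ 2 * hr2 + hpm - (Real.sin μ + s * Real.cos μ) * hsinμ
    nlinarith [mul_pos hcosμ hr]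
  have hRHS : Real.sqrt (2 * (4 + β ^ 2)) = 4 / r := by
    have h2 : 2 * (4 + β ^ 2) = (4 / r) ^ 2 := by
      rw [hβ]
      field_simp
      nlinarith
    rw [h2, Real.sqrt_sq (by positivity)]
  rw [hRHS]
  have hcs : Real.cos θ ^ 2 - Real.sin θ ^ 2 = c := by
    rw [hc, Real.cos_two_mul]
    linarith [Real.sin_sq_add_cos_sq θ]
  have hsin2 : 2 * Real.sin θ * Real.cos θ = s := (Real.sin_two_mul θ).symm
  have h4 : 4 * Real.sin μ * Real.cos θ * Real.sin θ = 2 * s ^ 2 * Real.cos μ := by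
    rw [hsinμ]; linear_combination (2 * s * Real.cos μ) * hsin2
  have hcosr : Real.cos μ = 1 / r := by
    field_simp; linarith [h1]
  rw [hcs, hβ, h4, hcosr]
  field_simp
  linear_combination 2 * hpyth

theorem maximal_violation_of_I_beta (θ β μ : ℝ)
    (hθ : θ ∈ Set.Ioo 0 (Real.pi / 2))
    (hβ : β = 2 * Real.cos (2 * θ) / Real.sqrt (1 + Real.sin (2 * θ) ^ 2))
    (hμ : μ ∈ Set.Ioo 0 (Real.pi / 2))
    (htan : Real.tan μ = Real.sin (2 * θ))
    (A0 A1 : Matrix (Fin 2) (Fin 2) ℂ)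
    (hA0 : A0 = (Real.cos μ : ℂ) • sigmaZ + (Real.sin μ : ℂ) • sigmaX)
    (hA1 : A1 = (Real.cos μ : ℂ) • sigmaZ - (Real.sin μ : ℂ) • sigmaX) :
    (β : ℂ) * expVal 1 sigmaZ (psiState θ)
      + expVal A0 sigmaZ (psiState θ) + expVal A1 sigmaZ (psiState θ)
      + expVal A0 sigmaX (psiState θ) - expVal A1 sigmaX (psiState θ)
      = (Real.sqrt (2 * (4 + β ^ 2)) : ℂ) := by
  subst hA0 hA1
  rw [expVal_one_sigmaZ, expVal_sigmaZ, expVal_sigmaZ, expVal_sigmaX, expVal_sigmaX]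
  have hkey := key_real_identity θ β μ hβ hμ htan
  trans ((β * (Real.cos θ ^ 2 - Real.sin θ ^ 2) + 2 * Real.cos μ
      + 4 * Real.sin μ * Real.cos θ * Real.sin θ : ℝ) : ℂ)
  · simp [sigmaZ, sigmaX, -Complex.ofReal_cos, -Complex.ofReal_sin]
    have hps : (Real.cos θ : ℂ) ^ 2 + (Real.sin θ : ℂ) ^ 2 = 1 := by
      norm_cast; exact Real.cos_sq_add_sin_sq θ
    push_cast [-Complex.ofReal_cos, -Complex.ofReal_sin]
    linear_combination (2 * (Real.cos μ : ℂ)) * hps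
  · rw [hkey]
end
end

section
/- Let θ ∈ (0, π/2), ξ ∈ (0, π/4], and b ∈ {+1, −1}. The (unnormalized) post-measurement vector φ := (1 ⊗ₖ M_b(ξ)).mulVec ψ(θ) ∈ ℂ^(Fin 2 × Fin 2) is nonzero and is not a product vector: there exist no vectors u, v ∈ ℂ² such that φ(i,j) = u(i)·v(j) for all i, j. In other words, the weak measurement M_b(ξ) applied to one half of the entangled state ψ(θ) leaves the post-measurement state entangled, irrespective of the outcome b. -/
noncomputable section

open Matrix Kronecker

/-- |+⟩ = (|0⟩ + |1⟩)/√2. -/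
def ketPlus : Fin 2 → ℂ := ![(Real.sqrt 2 : ℂ)⁻¹, (Real.sqrt 2 : ℂ)⁻¹]

/-- |−⟩ = (|0⟩ − |1⟩)/√2. -/
def ketMinus : Fin 2 → ℂ := ![(Real.sqrt 2 : ℂ)⁻¹, -(Real.sqrt 2 : ℂ)⁻¹]

/-- Projector |+⟩⟨+|. -/
def projPlus : Matrix (Fin 2) (Fin 2) ℂ := vecMulVec ketPlus (star ketPlus)

/-- Projector |−⟩⟨−|. -/
def projMinus : Matrix (Fin 2) (Fin 2) ℂ := vecMulVec ketMinus (star ketMinus)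

/-- Kraus operators of the weak measurement σ̂x(ξ):
`M ξ 1 = cos ξ |+⟩⟨+| + sin ξ |−⟩⟨−|` and `M ξ (-1) = cos ξ |−⟩⟨−| + sin ξ |+⟩⟨+|`. -/
def krausM (ξ : ℝ) (b : ℤ) : Matrix (Fin 2) (Fin 2) ℂ :=
  if b = 1 then (Real.cos ξ : ℂ) • projPlus + (Real.sin ξ : ℂ) • projMinus
  else (Real.cos ξ : ℂ) • projMinus + (Real.sin ξ : ℂ) • projPlus

theorem post_measurement_state_entangled (θ ξ : ℝ)
    (hθ : θ ∈ Set.Ioo 0 (Real.pi / 2)) (hξ : ξ ∈ Set.Ioc 0 (Real.pi / 4))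
    (b : ℤ) (hb : b = 1 ∨ b = -1)
    (φ : Fin 2 × Fin 2 → ℂ)
    (hφ : φ = ((1 : Matrix (Fin 2) (Fin 2) ℂ) ⊗ₖ krausM ξ b).mulVec (psiState θ)) :
    φ ≠ 0 ∧ ¬ ∃ u v : Fin 2 → ℂ, ∀ i j : Fin 2, φ (i, j) = u i * v j := by
  obtain ⟨hθ0, hθ1⟩ := hθ
  obtain ⟨hξ0, hξ1⟩ := hξ
  have h2 : ((Real.sqrt 2 : ℝ) : ℂ)⁻¹ * ((Real.sqrt 2 : ℝ) : ℂ)⁻¹ = 1/2 := by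
    rw [← mul_inv]; norm_cast
    rw [Real.mul_self_sqrt (by norm_num)]; norm_num
  have hdet : φ (0,0) * φ (1,1) - φ (0,1) * φ (1,0)
      = ((Real.cos θ * Real.sin θ * Real.cos ξ * Real.sin ξ : ℝ) : ℂ) := by
    subst hφ
    rcases hb with rfl | rfl <;>
    · simp [krausM, projPlus, projMinus, vecMulVec, ketPlus, ketMinus, psiState, mulVec,
        dotProduct, Fintype.sum_prod_type, Fin.sum_univ_two, Matrix.one_apply, h2]
      ring
  have hne : φ (0,0) * φ (1,1) - φ (0,1) * φ (1,0) ≠ 0 := by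
    rw [hdet]
    rw [Complex.ofReal_ne_zero]
    have h1 : 0 < Real.cos θ := Real.cos_pos_of_mem_Ioo ⟨by linarith [Real.pi_pos], hθ1⟩
    have h2' : 0 < Real.sin θ := Real.sin_pos_of_pos_of_lt_pi hθ0 (by linarith [Real.pi_pos])
    have h3 : 0 < Real.cos ξ := Real.cos_pos_of_mem_Ioo ⟨by linarith [Real.pi_pos],
      by linarith [Real.pi_pos]⟩
    have h4 : 0 < Real.sin ξ := Real.sin_pos_of_pos_of_lt_pi hξ0 (by linarith [Real.pi_pos])
    positivity
  constructor
  · intro h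
    rw [h] at hne
    simp at hne
  · rintro ⟨u, v, huv⟩
    apply hne
    rw [huv, huv, huv, huv]
    ring
end
end

section
/- Let θ ∈ (0, π/2), ξ ∈ (0, π/4], and b ∈ {+1, −1}, and let φ := (1 ⊗ₖ M_b(ξ)).mulVec ψ(θ). Then there exist 2×2 unitary matrices U, V and an angle θ' ∈ (0, π/4] such that φ/‖φ‖ = (U ⊗ₖ V).mulVec ψ(θ'); i.e. the normalized post-measurement state is, up to local unitaries depending on the outcome b and on θ and ξ, again a state of the Schmidt form cos(θ')|00⟩ + sin(θ')|11⟩ with Schmidt angle θ' in (0, π/4]. -/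
noncomputable section

open Matrix Kronecker

/-!
Identify a two-qubit state with its 2 × 2 coefficient matrix via `Matrix.vec`: then
`(A ⊗ₖ B) *ᵥ vec X = vec (B * X * Aᵀ)` and `ψ(θ)` is `vec (diag(cos θ, sin θ))`. Both Kraus
operators are real with determinant `cos ξ sin ξ > 0`, so the post-measurement state has a real
coefficient matrix `X` with `det X > 0`. Every real 2 × 2 matrix is `R(u) diag(P + Q, P - Q) R(v)`
with rotations `R` and `P, Q ≥ 0`. When `det X > 0` and `X` has unit Frobenius norm, this forces
`P - Q > 0` and `(P + Q)² + (P - Q)² = 1`, so `(P + Q, P - Q) = (cos θ', sin θ')` with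
`θ' ∈ (0, π/4]`.
-/

open Real

def planeRotation (t : ℝ) : Matrix (Fin 2) (Fin 2) ℝ := !![cos t, -sin t; sin t, cos t]

theorem planeRotation_transpose_mul_self (t : ℝ) : (planeRotation t)ᵀ * planeRotation t = 1 := by
  ext i j
  fin_cases i <;> fin_cases j <;>
    simp [planeRotation, mul_apply, Fin.sum_univ_two, one_apply] <;> linarith [sin_sq_add_cos_sq t]

theorem planeRotation_mul_transpose_self (t : ℝ) : planeRotation t * (planeRotation t)ᵀ = 1 :=
  mul_eq_one_comm.mp (planeRotation_transpose_mul_self t)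

theorem det_planeRotation (t : ℝ) : (planeRotation t).det = 1 := by
  simp [planeRotation, det_fin_two_of, ← sq, cos_sq_add_sin_sq]

theorem planeRotation_map_ofRealHom_mem_unitaryGroup (t : ℝ) :
    (planeRotation t).map Complex.ofRealHom ∈ unitaryGroup (Fin 2) ℂ := by
  rw [mem_unitaryGroup_iff', star_eq_conjTranspose,
    ← conjTranspose_map (Complex.ofRealHom : ℝ → ℂ) (fun x => by simp),
    conjTranspose_eq_transpose_of_trivial, ← Matrix.map_mul, planeRotation_transpose_mul_self,
    Matrix.map_one _ (map_zero _) (map_one _)]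

theorem exists_nonneg_mul_cos_eq_and_mul_sin_eq (x y : ℝ) :
    ∃ r α : ℝ, 0 ≤ r ∧ r * cos α = x ∧ r * sin α = y :=
  ⟨‖(⟨x, y⟩ : ℂ)‖, Complex.arg ⟨x, y⟩, norm_nonneg _, Complex.norm_mul_cos_arg _,
    Complex.norm_mul_sin_arg _⟩

theorem exists_planeRotation_mul_diagonal_mul_planeRotation (X : Matrix (Fin 2) (Fin 2) ℝ) :
    ∃ u v P Q : ℝ, 0 ≤ P ∧ 0 ≤ Q ∧
      X = planeRotation u * diagonal ![P + Q, P - Q] * planeRotation v := by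
  -- On `ℝ² = ℂ`, `X` acts as `w ↦ P e^{iα} w + Q e^{iβ} conj w`, and the right-hand side as
  -- `w ↦ P e^{i(u+v)} w + Q e^{i(u-v)} conj w`.
  obtain ⟨P, α, hP, hPc, hPs⟩ :=
    exists_nonneg_mul_cos_eq_and_mul_sin_eq ((X 0 0 + X 1 1) / 2) ((X 1 0 - X 0 1) / 2)
  obtain ⟨Q, β, hQ, hQc, hQs⟩ :=
    exists_nonneg_mul_cos_eq_and_mul_sin_eq ((X 0 0 - X 1 1) / 2) ((X 1 0 + X 0 1) / 2)
  obtain ⟨u, v, rfl, rfl⟩ : ∃ u v, α = u + v ∧ β = u - v :=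
    ⟨(α + β) / 2, (α - β) / 2, by ring, by ring⟩
  rw [cos_add] at hPc
  rw [sin_add] at hPs
  rw [cos_sub] at hQc
  rw [sin_sub] at hQs
  refine ⟨u, v, P, Q, hP, hQ, ?_⟩
  ext i j
  fin_cases i <;> fin_cases j <;> simp [planeRotation, mul_apply, Fin.sum_univ_two, vecMul_diagonal]
  · linear_combination -hPc - hQc
  · linear_combination hPs - hQs
  · linear_combination -hPs - hQs
  · linear_combination -hPc + hQc

theorem exists_mem_Ioc_cos_eq_and_sin_eq {x y : ℝ} (hy : 0 < y) (hyx : y ≤ x)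
    (hxy : x ^ 2 + y ^ 2 = 1) : ∃ θ ∈ Set.Ioc 0 (π / 4), cos θ = x ∧ sin θ = y := by
  have hx1 : x < 1 := by nlinarith
  refine ⟨arccos x, ⟨arccos_pos.2 hx1, arccos_le_pi_div_four.2 ?_⟩,
    cos_arccos (by linarith) hx1.le, ?_⟩
  · nlinarith [sq_sqrt (zero_le_two : (0 : ℝ) ≤ 2), sqrt_nonneg 2]
  · rw [sin_arccos, show 1 - x ^ 2 = y ^ 2 by linarith, sqrt_sq hy.le]

theorem exists_planeRotation_mul_diagonal_cos_sin_mul_planeRotation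
    (X : Matrix (Fin 2) (Fin 2) ℝ) (hX : X.vec ⬝ᵥ X.vec = 1) (hdet : 0 < X.det) :
    ∃ u v θ : ℝ, θ ∈ Set.Ioc 0 (π / 4) ∧
      X = planeRotation u * diagonal ![cos θ, sin θ] * planeRotation v := by
  obtain ⟨u, v, P, Q, hP, hQ, rfl⟩ := exists_planeRotation_mul_diagonal_mul_planeRotation X
  set D := diagonal ![P + Q, P - Q]
  have hdetD : (planeRotation u * D * planeRotation v).det = (P + Q) * (P - Q) := by
    simp [D, det_planeRotation, det_diagonal, Fin.prod_univ_two]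
  have hnormD : (planeRotation u * D * planeRotation v).vec ⬝ᵥ
      (planeRotation u * D * planeRotation v).vec = (P + Q) ^ 2 + (P - Q) ^ 2 := calc
    _ = ((planeRotation v)ᵀ * (D * D * planeRotation v)).trace := by
      rw [vec_dotProduct_vec]
      simp only [transpose_mul, D, diagonal_transpose, Matrix.mul_assoc]
      rw [← Matrix.mul_assoc (planeRotation u)ᵀ, planeRotation_transpose_mul_self, Matrix.one_mul]
    _ = (D * D).trace := by
      rw [trace_mul_comm, Matrix.mul_assoc, planeRotation_mul_transpose_self, Matrix.mul_one]
    _ = (P + Q) ^ 2 + (P - Q) ^ 2 := by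
      simp [D, diagonal_mul_diagonal, trace_diagonal, Fin.sum_univ_two, sq]
  have hPQ : 0 < P - Q := by nlinarith
  obtain ⟨θ, hθ, hcos, hsin⟩ := exists_mem_Ioc_cos_eq_and_sin_eq hPQ (by linarith) (hnormD ▸ hX)
  exact ⟨u, v, θ, hθ, by rw [hcos, hsin]⟩

theorem psiState_eq_vec (θ : ℝ) :
    psiState θ = vec ((diagonal ![cos θ, sin θ]).map Complex.ofRealHom) := by
  funext ⟨i, j⟩
  fin_cases i <;> fin_cases j <;> simp [psiState]

theorem star_vec_map_ofRealHom_dotProduct {m n : Type*} [Fintype m] [Fintype n]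
    (X : Matrix m n ℝ) :
    star (vec (X.map Complex.ofRealHom)) ⬝ᵥ vec (X.map Complex.ofRealHom) =
      ((X.vec ⬝ᵥ X.vec : ℝ) : ℂ) := by
  simp [dotProduct, vec]

theorem exists_vec_map_ofRealHom_eq_kronecker_mulVec_psiState (X : Matrix (Fin 2) (Fin 2) ℝ)
    (hX : X.vec ⬝ᵥ X.vec = 1) (hdet : 0 < X.det) :
    ∃ (U V : Matrix (Fin 2) (Fin 2) ℂ) (θ : ℝ),
      U ∈ unitaryGroup (Fin 2) ℂ ∧ V ∈ unitaryGroup (Fin 2) ℂ ∧ θ ∈ Set.Ioc 0 (π / 4) ∧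
      vec (X.map Complex.ofRealHom) = (U ⊗ₖ V) *ᵥ psiState θ := by
  obtain ⟨u, v, θ, hθ, rfl⟩ :=
    exists_planeRotation_mul_diagonal_cos_sin_mul_planeRotation X hX hdet
  refine ⟨((planeRotation v).map Complex.ofRealHom)ᵀ, (planeRotation u).map Complex.ofRealHom, θ,
    transpose_mem_unitaryGroup_iff.2 (planeRotation_map_ofRealHom_mem_unitaryGroup v),
    planeRotation_map_ofRealHom_mem_unitaryGroup u, hθ, ?_⟩
  rw [psiState_eq_vec, kronecker_mulVec_vec, transpose_transpose, Matrix.map_mul, Matrix.map_mul]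

theorem exists_inv_sqrt_smul_vec_map_ofRealHom_eq_kronecker_mulVec_psiState
    (X : Matrix (Fin 2) (Fin 2) ℝ) (hdet : 0 < X.det) :
    ∃ (U V : Matrix (Fin 2) (Fin 2) ℂ) (θ : ℝ),
      U ∈ unitaryGroup (Fin 2) ℂ ∧ V ∈ unitaryGroup (Fin 2) ℂ ∧ θ ∈ Set.Ioc 0 (π / 4) ∧
      ((√(X.vec ⬝ᵥ X.vec) : ℝ) : ℂ)⁻¹ • vec (X.map Complex.ofRealHom) =
        (U ⊗ₖ V) *ᵥ psiState θ := by
  set r := √(X.vec ⬝ᵥ X.vec)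
  have hnorm_pos : 0 < X.vec ⬝ᵥ X.vec := by
    refine lt_of_le_of_ne (Finset.sum_nonneg fun _ _ => mul_self_nonneg _) fun h => hdet.ne' ?_
    rw [vec_eq_zero_iff.1 (dotProduct_self_eq_zero.1 h.symm), det_zero]
  have hr : r ^ 2 = X.vec ⬝ᵥ X.vec := sq_sqrt hnorm_pos.le
  have hr_pos : 0 < r := sqrt_pos.2 hnorm_pos
  obtain ⟨U, V, θ, hU, hV, hθ, h⟩ := exists_vec_map_ofRealHom_eq_kronecker_mulVec_psiState (r⁻¹ • X)
    (by rw [vec_smul, dotProduct_smul, smul_dotProduct, smul_smul, smul_eq_mul, ← hr]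
        field_simp)
    (by rw [det_smul, Fintype.card_fin]; positivity)
  refine ⟨U, V, θ, hU, hV, hθ, ?_⟩
  rw [← h, ← vec_smul]
  congr
  ext
  simp

theorem ofReal_sqrt_two_inv_mul_self : ((√2 : ℝ) : ℂ)⁻¹ * ((√2 : ℝ) : ℂ)⁻¹ = 1 / 2 := by
  rw [← mul_inv, ← Complex.ofReal_mul, mul_self_sqrt zero_le_two]
  norm_num

theorem projPlus_eq : projPlus = !![1 / 2, 1 / 2; 1 / 2, 1 / 2] := by
  ext i j
  fin_cases i <;> fin_cases j <;>
    simp [projPlus, ketPlus, vecMulVec_apply, ofReal_sqrt_two_inv_mul_self]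

theorem projMinus_eq : projMinus = !![1 / 2, -1 / 2; -1 / 2, 1 / 2] := by
  ext i j
  fin_cases i <;> fin_cases j <;>
    simp [projMinus, ketMinus, vecMulVec_apply, ofReal_sqrt_two_inv_mul_self, neg_div]

theorem exists_krausM_eq_map_ofRealHom (ξ : ℝ) (b : ℤ) :
    ∃ K : Matrix (Fin 2) (Fin 2) ℝ, krausM ξ b = K.map Complex.ofRealHom ∧
      K.det = cos ξ * sin ξ := by
  by_cases hb : b = 1
  · refine ⟨!![(cos ξ + sin ξ) / 2, (cos ξ - sin ξ) / 2; (cos ξ - sin ξ) / 2, (cos ξ + sin ξ) / 2],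
      ?_, by rw [det_fin_two_of]; ring⟩
    ext i j
    fin_cases i <;> fin_cases j <;> simp [krausM, hb, projPlus_eq, projMinus_eq] <;> ring
  · refine ⟨!![(cos ξ + sin ξ) / 2, (sin ξ - cos ξ) / 2; (sin ξ - cos ξ) / 2, (cos ξ + sin ξ) / 2],
      ?_, by rw [det_fin_two_of]; ring⟩
    ext i j
    fin_cases i <;> fin_cases j <;> simp [krausM, hb, projPlus_eq, projMinus_eq] <;> ring

theorem cos_mul_sin_pos {x : ℝ} (hx : x ∈ Set.Ioo 0 (π / 2)) : 0 < cos x * sin x :=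
  mul_pos (cos_pos_of_mem_Ioo ⟨by linarith [hx.1, pi_pos], hx.2⟩)
    (sin_pos_of_pos_of_lt_pi hx.1 (by linarith [hx.2, pi_pos]))

theorem post_measurement_state_schmidt_form_general (θ ξ : ℝ)
    (hθ : θ ∈ Set.Ioo 0 (Real.pi / 2)) (hξ : ξ ∈ Set.Ioc 0 (Real.pi / 4))
    (b : ℤ)
    (φ : Fin 2 × Fin 2 → ℂ)
    (hφ : φ = ((1 : Matrix (Fin 2) (Fin 2) ℂ) ⊗ₖ krausM ξ b).mulVec (psiState θ)) :
    ∃ (U V : Matrix (Fin 2) (Fin 2) ℂ) (θ' : ℝ),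
      U ∈ Matrix.unitaryGroup (Fin 2) ℂ ∧ V ∈ Matrix.unitaryGroup (Fin 2) ℂ ∧
      θ' ∈ Set.Ioc 0 (Real.pi / 4) ∧
      ((Real.sqrt ((star φ ⬝ᵥ φ).re) : ℂ))⁻¹ • φ = (U ⊗ₖ V).mulVec (psiState θ') := by
  obtain ⟨K, hK, hKdet⟩ := exists_krausM_eq_map_ofRealHom ξ b
  set Y := K * diagonal ![cos θ, sin θ]
  have hφY : φ = vec (Y.map Complex.ofRealHom) := by
    rw [hφ, hK, psiState_eq_vec, kronecker_mulVec_vec, transpose_one, Matrix.mul_one,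
      Matrix.map_mul]
  have hYdet : 0 < Y.det := by
    rw [det_mul, hKdet, det_diagonal, Fin.prod_univ_two]
    exact mul_pos (cos_mul_sin_pos ⟨hξ.1, by linarith [hξ.2, pi_pos]⟩) (cos_mul_sin_pos hθ)
  rw [hφY, star_vec_map_ofRealHom_dotProduct, Complex.ofReal_re]
  exact exists_inv_sqrt_smul_vec_map_ofRealHom_eq_kronecker_mulVec_psiState Y hYdet

theorem post_measurement_state_schmidt_form (θ ξ : ℝ)
    (hθ : θ ∈ Set.Ioo 0 (Real.pi / 2)) (hξ : ξ ∈ Set.Ioc 0 (Real.pi / 4))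
    (b : ℤ) (hb : b = 1 ∨ b = -1)
    (φ : Fin 2 × Fin 2 → ℂ)
    (hφ : φ = ((1 : Matrix (Fin 2) (Fin 2) ℂ) ⊗ₖ krausM ξ b).mulVec (psiState θ)) :
    ∃ (U V : Matrix (Fin 2) (Fin 2) ℂ) (θ' : ℝ),
      U ∈ Matrix.unitaryGroup (Fin 2) ℂ ∧ V ∈ Matrix.unitaryGroup (Fin 2) ℂ ∧
      θ' ∈ Set.Ioc 0 (Real.pi / 4) ∧
      ((Real.sqrt ((star φ ⬝ᵥ φ).re) : ℂ))⁻¹ • φ = (U ⊗ₖ V).mulVec (psiState θ') :=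
  post_measurement_state_schmidt_form_general θ ξ hθ hξ b φ hφ
end
end

section
/- Let α ≥ 1 and β ≥ 0 be real numbers and let a₀, a₁, b₀, b₁ be real numbers each equal to +1 or −1 (a deterministic local strategy). Then β·b₀ + α(a₀·b₀ + a₁·b₀) + a₀·b₁ − a₁·b₁ ≤ β + 2α; that is, the local (classical) bound of the Bell inequality I_{α,β} is β + 2α. -/
theorem local_bound_of_I_alpha_beta (α β a0 a1 b0 b1 : ℝ)
    (hα : 1 ≤ α) (hβ : 0 ≤ β)
    (ha0 : a0 = 1 ∨ a0 = -1) (ha1 : a1 = 1 ∨ a1 = -1)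
    (hb0 : b0 = 1 ∨ b0 = -1) (hb1 : b1 = 1 ∨ b1 = -1) :
    β * b0 + α * (a0 * b0 + a1 * b0) + a0 * b1 - a1 * b1 ≤ β + 2 * α := by
  rcases ha0 with h|h <;> rcases ha1 with h1|h1 <;> rcases hb0 with h2|h2 <;>
    rcases hb1 with h3|h3 <;> subst h h1 h2 h3 <;> nlinarith
end

section
/- (Concave roof extensions are upper semicontinuous.) Let C be a compact subset of a finite-dimensional real normed vector space E, and let F : E → ℝ be bounded on C, upper semicontinuous on C, and concave on C in the sense that whenever x₁,…,x_k ∈ C, q₁,…,q_k ≥ 0 with ∑ q_i = 1 and ∑ q_i x_i ∈ C, one has F(∑ q_i x_i) ≥ ∑ q_i F(x_i). Define the concave roof extension F̂ on K := convexHull(C) by F̂(x) := sup{ ∑ q_i F(x_i) : k ∈ ℕ, x_i ∈ C, q_i ≥ 0, ∑ q_i = 1, ∑ q_i x_i = x }. Then F̂ is upper semicontinuous on K. -/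
/-!
By Carathéodory's theorem in `E × ℝ`, applied to the point `(x, ∑ qᵢ F(yᵢ))` of the convex hull
of the graph of `F` over `C`, every value in the supremum defining `F̂ x` is already attained by a
decomposition into `N = dim E + 2` points. Hence `F̂ x` is the supremum of the upper semicontinuous
function `(y, q) ↦ ∑ qᵢ F(yᵢ)` over the fibre above `x` of the continuous barycentre map
`(y, q) ↦ ∑ qᵢ yᵢ` on the compact set `Cᴺ × Δᴺ`. A fibrewise supremum of this kind is upper
semicontinuous: the superlevel sets are compact, so their images under the barycentre map are
closed.
-/

open Filter Topology Set Function

theorem ContinuousWithinAt.mul_upperSemicontinuousWithinAt {α : Type*} [TopologicalSpace α]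
    {g f : α → ℝ} {s : Set α} {x : α} (hg : ContinuousWithinAt g s x) (hg0 : ∀ y ∈ s, 0 ≤ g y)
    (hf : UpperSemicontinuousWithinAt f s x) :
    UpperSemicontinuousWithinAt (fun y => g y * f y) s x := by
  intro r hr
  obtain ⟨t, hft, ht⟩ : ∃ t, f x < t ∧ g x * t < r := by
    have hnear : ∀ᶠ t in 𝓝[>] f x, g x * t < r :=
      (((continuous_const_mul (g x)).tendsto (f x)).eventually (gt_mem_nhds hr)).filter_mono
        nhdsWithin_le_nhds
    obtain ⟨t, hrt, hft⟩ := (hnear.and self_mem_nhdsWithin).exists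
    exact ⟨t, hft, hrt⟩
  filter_upwards [hf t hft, (hg.mul_const t).eventually (gt_mem_nhds ht), self_mem_nhdsWithin]
    with y hfy hgy hy
  exact (mul_le_mul_of_nonneg_left hfy.le (hg0 y hy)).trans_lt hgy

theorem IsCompact.upperSemicontinuousOn_sSup_image_fiber {X Y γ : Type*} [TopologicalSpace X]
    [TopologicalSpace Y] [T2Space Y] [ConditionallyCompleteLinearOrder γ] [TopologicalSpace γ]
    [OrderTopology γ] [DenselyOrdered γ] {T : Set X} (hT : IsCompact T) {π : X → Y}
    (hπ : ContinuousOn π T) {Φ : X → γ} (hΦ : UpperSemicontinuousOn Φ T) :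
    UpperSemicontinuousOn (fun y => sSup (Φ '' {p ∈ T | π p = y})) (π '' T) := by
  rintro _ ⟨p₀, hp₀, rfl⟩ r hr
  have : Nonempty γ := ⟨Φ p₀⟩
  obtain ⟨r', hr'⟩ := exists_between hr
  have hclosed : IsClosed (π '' (T ∩ Φ ⁻¹' Ici r')) :=
    ((hΦ.isCompact_inter_preimage_Ici hT r').image_of_continuousOn
      (hπ.mono inter_subset_left)).isClosed
  have hp₀_not_mem : π p₀ ∉ π '' (T ∩ Φ ⁻¹' Ici r') := by
    rintro ⟨p, ⟨hpT, hpr⟩, hp⟩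
    have : Φ p ≤ sSup (Φ '' {p ∈ T | π p = π p₀}) :=
      le_csSup ((hΦ.bddAbove_of_isCompact hT).mono (image_mono fun q hq => hq.1))
        (mem_image_of_mem Φ ⟨hpT, hp⟩)
    exact (hr'.1.trans_le hpr).not_ge this
  filter_upwards [mem_nhdsWithin_of_mem_nhds (hclosed.isOpen_compl.mem_nhds hp₀_not_mem),
    self_mem_nhdsWithin] with y hy ⟨q, hq⟩
  refine (csSup_le ⟨Φ q, mem_image_of_mem Φ hq⟩ ?_).trans_lt hr'.2
  rintro _ ⟨p, ⟨hpT, rfl⟩, rfl⟩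
  by_contra! h
  exact hy ⟨p, ⟨hpT, h.le⟩, rfl⟩

theorem exists_fin_stdSimplex_of_mem_convexHull {𝕜 V : Type*} [Field 𝕜] [LinearOrder 𝕜]
    [IsStrictOrderedRing 𝕜] [AddCommGroup V] [Module 𝕜 V] [FiniteDimensional 𝕜 V] {G : Set V}
    {x : V} (hx : x ∈ convexHull 𝕜 G) {n : ℕ} (hn : Module.finrank 𝕜 V + 1 ≤ n) :
    ∃ z : Fin n → V, ∃ q ∈ stdSimplex 𝕜 (Fin n), (∀ i, z i ∈ G) ∧ ∑ i, q i • z i = x := by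
  classical
  obtain ⟨ι, _, z, w, hzG, hind, hw0, hw1, hwx⟩ := eq_pos_convex_span_of_mem_convexHull hx
  obtain ⟨g, hg⟩ := convexHull_nonempty_iff.mp ⟨x, hx⟩
  have hcard : Fintype.card ι ≤ n :=
    (hind.card_le_finrank_succ.trans (Nat.add_le_add_right (Submodule.finrank_le _) 1)).trans hn
  let e : ι ↪ Fin n := (Fintype.equivFin ι).toEmbedding.trans (Fin.castLEEmb hcard)
  have hoff : ∀ j ∉ range e, extend e w 0 j = 0 := fun j hj => extend_apply' _ _ _ hj
  refine ⟨extend e z fun _ => g, extend e w 0, ⟨fun j => ?_, ?_⟩, fun j => ?_, ?_⟩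
  · by_cases hj : j ∈ range e
    · obtain ⟨i, rfl⟩ := hj
      exact (e.injective.extend_apply w 0 i).symm ▸ (hw0 i).le
    · rw [hoff j hj]
  · rw [← hw1]
    exact (Fintype.sum_of_injective e e.injective w _ hoff
      fun i => (e.injective.extend_apply _ _ _).symm).symm
  · by_cases hj : j ∈ range e
    · obtain ⟨i, rfl⟩ := hj
      rw [e.injective.extend_apply]
      exact hzG (mem_range_self i)
    · rwa [extend_apply' _ _ _ hj]
  · rw [← hwx]
    refine (Fintype.sum_of_injective e e.injective _ _ (fun j hj => ?_) fun i => ?_).symm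
    · rw [hoff j hj, zero_smul]
    · simp only [e.injective.extend_apply]

namespace ConcaveRoof

variable {E : Type*}

def decompositions (C : Set E) (n : ℕ) : Set ((Fin n → E) × (Fin n → ℝ)) :=
  (univ.pi fun _ => C) ×ˢ stdSimplex ℝ (Fin n)

def value (F : E → ℝ) {n : ℕ} (p : (Fin n → E) × (Fin n → ℝ)) : ℝ :=
  ∑ i, p.2 i * F (p.1 i)

section Topology

variable [TopologicalSpace E]

theorem isCompact_decompositions {C : Set E} (hC : IsCompact C) (n : ℕ) :
    IsCompact (decompositions C n) :=
  (isCompact_univ_pi fun _ => hC).prod (isCompact_stdSimplex ℝ (Fin n))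

theorem upperSemicontinuousOn_value {C : Set E} {F : E → ℝ} (hF : UpperSemicontinuousOn F C)
    (n : ℕ) : UpperSemicontinuousOn (value F) (decompositions C n) := by
  refine upperSemicontinuousOn_sum fun i _ p hp => ?_
  have hweight : Continuous fun q : (Fin n → E) × (Fin n → ℝ) => q.2 i :=
    (continuous_apply i).comp continuous_snd
  have hpoint : Continuous fun q : (Fin n → E) × (Fin n → ℝ) => q.1 i :=
    (continuous_apply i).comp continuous_fst
  have hFi : UpperSemicontinuousWithinAt (fun q => F (q.1 i)) (decompositions C n) p :=
    UpperSemicontinuousWithinAt.comp (g := fun q : (Fin n → E) × (Fin n → ℝ) => q.1 i)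
      (hF _ (hp.1 i trivial)) hpoint.continuousWithinAt fun q hq => hq.1 i trivial
  exact hweight.continuousWithinAt.mul_upperSemicontinuousWithinAt (fun q hq => hq.2.1 i) hFi

end Topology

variable [AddCommGroup E] [Module ℝ E]

def barycenter {n : ℕ} (p : (Fin n → E) × (Fin n → ℝ)) : E :=
  ∑ i, p.2 i • p.1 i

theorem continuous_barycenter [TopologicalSpace E] [ContinuousAdd E] [ContinuousSMul ℝ E]
    (n : ℕ) : Continuous (barycenter : (Fin n → E) × (Fin n → ℝ) → E) :=
  continuous_finsetSum _ fun i _ =>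
    ((continuous_apply i).comp continuous_snd).smul ((continuous_apply i).comp continuous_fst)

variable [FiniteDimensional ℝ E]

theorem convexHull_subset_image_barycenter {C : Set E} {n : ℕ}
    (hn : Module.finrank ℝ E + 1 ≤ n) : convexHull ℝ C ⊆ barycenter '' decompositions C n := by
  intro x hx
  obtain ⟨z, q, hq, hzC, hzx⟩ := exists_fin_stdSimplex_of_mem_convexHull hx hn
  exact ⟨(z, q), ⟨fun i _ => hzC i, hq⟩, hzx⟩

theorem setOf_decomposition_values_eq (C : Set E) (F : E → ℝ) (x : E) :
    {r : ℝ | ∃ (k : ℕ) (y : Fin k → E) (q : Fin k → ℝ),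
      (∀ i, y i ∈ C) ∧ (∀ i, 0 ≤ q i) ∧ ∑ i, q i = 1 ∧
      ∑ i, q i • y i = x ∧ ∑ i, q i * F (y i) = r} =
    value F '' {p ∈ decompositions C (Module.finrank ℝ (E × ℝ) + 1) | barycenter p = x} := by
  ext r
  constructor
  · rintro ⟨k, y, q, hyC, hq0, hq1, rfl, rfl⟩
    have hgraph : ((∑ i, q i • y i, ∑ i, q i * F (y i)) : E × ℝ) ∈
        convexHull ℝ ((fun c => (c, F c)) '' C) := by
      have hsum : ((∑ i, q i • y i, ∑ i, q i * F (y i)) : E × ℝ) =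
          ∑ i, q i • ((y i, F (y i)) : E × ℝ) := by
        ext <;> simp [Prod.fst_sum, Prod.snd_sum]
      rw [hsum]
      exact (convex_convexHull ℝ _).sum_mem (fun i _ => hq0 i) hq1
        fun i _ => subset_convexHull ℝ _ (mem_image_of_mem _ (hyC i))
    obtain ⟨w, q', hq', hwG, hw⟩ := exists_fin_stdSimplex_of_mem_convexHull hgraph le_rfl
    choose c hcC hcw using hwG
    have hw' : ∑ i, q' i • ((c i, F (c i)) : E × ℝ) = (∑ i, q i • y i, ∑ i, q i * F (y i)) := by
      simpa only [hcw] using hw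
    refine ⟨(c, q'), ⟨⟨fun i _ => hcC i, hq'⟩, ?_⟩, ?_⟩
    · simpa [barycenter, Prod.fst_sum] using congrArg Prod.fst hw'
    · simpa [value, Prod.snd_sum] using congrArg Prod.snd hw'
  · rintro ⟨p, ⟨hpC, hp⟩, rfl⟩
    exact ⟨_, p.1, p.2, fun i => hpC.1 i trivial, hpC.2.1, hpC.2.2, hp, rfl⟩

end ConcaveRoof

theorem concave_roof_extension_upper_semicontinuous_general
    {E : Type*} [NormedAddCommGroup E] [NormedSpace ℝ E] [FiniteDimensional ℝ E]
    (C : Set E) (hC : IsCompact C) (F : E → ℝ)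
    (husc : UpperSemicontinuousOn F C)
    (Fhat : E → ℝ)
    (hFhat : ∀ x : E, Fhat x =
      sSup {r : ℝ | ∃ (k : ℕ) (y : Fin k → E) (q : Fin k → ℝ),
        (∀ i, y i ∈ C) ∧ (∀ i, 0 ≤ q i) ∧ ∑ i, q i = 1 ∧
        ∑ i, q i • y i = x ∧ ∑ i, q i * F (y i) = r}) :
    UpperSemicontinuousOn Fhat (convexHull ℝ C) := by
  set N := Module.finrank ℝ (E × ℝ) + 1
  obtain rfl : Fhat = fun x => sSup (ConcaveRoof.value F ''
      {p ∈ ConcaveRoof.decompositions C N | ConcaveRoof.barycenter p = x}) :=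
    funext fun x => by rw [hFhat, ConcaveRoof.setOf_decomposition_values_eq]
  have hN : Module.finrank ℝ E + 1 ≤ N := by simp [N, Module.finrank_prod]
  exact ((ConcaveRoof.isCompact_decompositions hC N).upperSemicontinuousOn_sSup_image_fiber
    (ConcaveRoof.continuous_barycenter N).continuousOn
    (ConcaveRoof.upperSemicontinuousOn_value husc N)).mono
    (ConcaveRoof.convexHull_subset_image_barycenter hN)

theorem concave_roof_extension_upper_semicontinuous
    {E : Type*} [NormedAddCommGroup E] [NormedSpace ℝ E] [FiniteDimensional ℝ E]
    (C : Set E) (hC : IsCompact C) (F : E → ℝ)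
    (hbdd : ∃ M : ℝ, ∀ x ∈ C, |F x| ≤ M)
    (husc : UpperSemicontinuousOn F C)
    (hconc : ∀ (k : ℕ) (x : Fin k → E) (q : Fin k → ℝ),
      (∀ i, x i ∈ C) → (∀ i, 0 ≤ q i) → ∑ i, q i = 1 → (∑ i, q i • x i) ∈ C →
      ∑ i, q i * F (x i) ≤ F (∑ i, q i • x i))
    (Fhat : E → ℝ)
    (hFhat : ∀ x : E, Fhat x =
      sSup {r : ℝ | ∃ (k : ℕ) (y : Fin k → E) (q : Fin k → ℝ),
        (∀ i, y i ∈ C) ∧ (∀ i, 0 ≤ q i) ∧ ∑ i, q i = 1 ∧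
        ∑ i, q i • y i = x ∧ ∑ i, q i * F (y i) = r}) :
    UpperSemicontinuousOn Fhat (convexHull ℝ C) :=
  concave_roof_extension_upper_semicontinuous_general C hC F husc Fhat hFhat
end

section
/- (Proposition 1.) Let K be a compact convex subset of a finite-dimensional real normed vector space E and let f : E → ℝ be continuous on K and convex on K. Define G : K → ℝ by G(x) := sup{ ∑ q_i f(e_i) : k ∈ ℕ, e_i ∈ extremePoints(K), q_i ≥ 0, ∑ q_i = 1, ∑ q_i e_i = x }. Then G is continuous on the interior of K. -/
/-!
Gluing two decompositions of `x` and `y` with weights `a, b` gives a decomposition of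
`a • x + b • y`, so `G` is concave wherever every decomposition set is nonempty and bounded
above. By Krein–Milman, `K` is the closure of the convex hull of its extreme points; a convex
set and its closure have the same interior in finite dimension, so every interior point of `K`
admits a decomposition. A concave function on an open convex set in finite dimension is
continuous.
-/

open scoped BigOperators Pointwise
open Set

section DecompositionValues

variable {E : Type*} [AddCommGroup E] [Module ℝ E]

def decompositionValues (K : Set E) (f : E → ℝ) (x : E) : Set ℝ :=
  {r : ℝ | ∃ (k : ℕ) (e : Fin k → E) (q : Fin k → ℝ),
    (∀ i, e i ∈ Set.extremePoints ℝ K) ∧ (∀ i, 0 ≤ q i) ∧ ∑ i, q i = 1 ∧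
    ∑ i, q i • e i = x ∧ ∑ i, q i * f (e i) = r}

variable (K : Set E) (f : E → ℝ)

lemma smul_add_smul_decompositionValues_subset {a b : ℝ} (ha : 0 ≤ a) (hb : 0 ≤ b)
    (hab : a + b = 1) (x y : E) :
    a • decompositionValues K f x + b • decompositionValues K f y ⊆
      decompositionValues K f (a • x + b • y) := by
  rintro _ ⟨_, ⟨_, ⟨k₁, e₁, q₁, he₁, hq₁, hs₁, hx₁, rfl⟩, rfl⟩,
    _, ⟨_, ⟨k₂, e₂, q₂, he₂, hq₂, hs₂, hx₂, rfl⟩, rfl⟩, rfl⟩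
  refine ⟨k₁ + k₂, Fin.append e₁ e₂, Fin.append (a • q₁) (b • q₂), ?_, ?_, ?_, ?_, ?_⟩
  · intro i
    cases i using Fin.addCases with
    | left j => simpa only [Fin.append_left] using he₁ j
    | right j => simpa only [Fin.append_right] using he₂ j
  · intro i
    cases i using Fin.addCases with
    | left j => simpa only [Fin.append_left, Pi.smul_apply, smul_eq_mul] using mul_nonneg ha (hq₁ j)
    | right j => simpa only [Fin.append_right, Pi.smul_apply, smul_eq_mul] using mul_nonneg hb (hq₂ j)
  all_goals
    simp only [Fin.sum_univ_add, Fin.append_left, Fin.append_right, Pi.smul_apply, smul_eq_mul,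
      mul_smul, mul_assoc, ← Finset.mul_sum, ← Finset.smul_sum]
  · rw [hs₁, hs₂, mul_one, mul_one, hab]
  · rw [hx₁, hx₂]

lemma decompositionValues_nonempty {x : E} (hx : x ∈ convexHull ℝ (K.extremePoints ℝ)) :
    (decompositionValues K f x).Nonempty := by
  obtain ⟨ι, _, w, z, hw₀, hw₁, hz, rfl⟩ := mem_convexHull_iff_exists_fintype.1 hx
  let e := Fintype.equivFin ι
  exact ⟨_, Fintype.card ι, z ∘ e.symm, w ∘ e.symm, fun _ => hz _, fun _ => hw₀ _,
    (e.symm.sum_comp w).trans hw₁, e.symm.sum_comp fun i => w i • z i, rfl⟩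

lemma decompositionValues_bddAbove (hf : BddAbove (f '' K.extremePoints ℝ)) (x : E) :
    BddAbove (decompositionValues K f x) := by
  obtain ⟨M, hM⟩ := hf
  refine ⟨M, ?_⟩
  rintro _ ⟨k, e, q, he, hq, hs, -, rfl⟩
  calc ∑ i, q i * f (e i) ≤ ∑ i, q i * M :=
        Finset.sum_le_sum fun i _ => mul_le_mul_of_nonneg_left (hM ⟨e i, he i, rfl⟩) (hq i)
    _ = M := by rw [← Finset.sum_mul, hs, one_mul]

lemma concaveOn_sSup_decompositionValues {s : Set E} (hs : Convex ℝ s)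
    (hsK : s ⊆ convexHull ℝ (K.extremePoints ℝ)) (hf : BddAbove (f '' K.extremePoints ℝ)) :
    ConcaveOn ℝ s fun x => sSup (decompositionValues K f x) := by
  refine ⟨hs, fun x hx y hy a b ha hb hab => ?_⟩
  have hne := fun z (hz : z ∈ s) => decompositionValues_nonempty K f (hsK hz)
  have hbdd := decompositionValues_bddAbove K f hf
  calc a • sSup (decompositionValues K f x) + b • sSup (decompositionValues K f y)
      = sSup (a • decompositionValues K f x + b • decompositionValues K f y) := by
        rw [csSup_add ((hne x hx).smul_set) ((hbdd x).smul_of_nonneg ha)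
          ((hne y hy).smul_set) ((hbdd y).smul_of_nonneg hb),
          Real.sSup_smul_of_nonneg ha, Real.sSup_smul_of_nonneg hb]
    _ ≤ sSup (decompositionValues K f (a • x + b • y)) :=
        csSup_le_csSup (hbdd _) (((hne x hx).smul_set).add (hne y hy).smul_set)
          (smul_add_smul_decompositionValues_subset K f ha hb hab x y)

end DecompositionValues

section FiniteDimensional

variable {E : Type*} [NormedAddCommGroup E] [NormedSpace ℝ E] [FiniteDimensional ℝ E]

theorem Convex.interior_closure_eq_interior {s : Set E} (hs : Convex ℝ s) :
    interior (closure s) = interior s := by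
  rcases (interior (closure s)).eq_empty_or_nonempty with h | h
  · rw [h, eq_comm, ← subset_empty_iff, ← h]
    exact interior_mono subset_closure
  refine hs.interior_closure_eq_interior_of_nonempty_interior ?_
  rw [hs.interior_nonempty_iff_affineSpan_eq_top]
  refine top_unique ((hs.closure.interior_nonempty_iff_affineSpan_eq_top.1 h).symm.trans_le ?_)
  exact affineSpan_le.2
    (closure_minimal (subset_affineSpan ℝ s) (affineSpan ℝ s).closed_of_finiteDimensional)

theorem interior_subset_convexHull_extremePoints {K : Set E} (hKc : IsCompact K)
    (hKconv : Convex ℝ K) : interior K ⊆ convexHull ℝ (K.extremePoints ℝ) := by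
  calc interior K = interior (convexHull ℝ (K.extremePoints ℝ)) := by
        rw [← (convex_convexHull ℝ _).interior_closure_eq_interior,
          closure_convexHull_extremePoints hKc hKconv]
    _ ⊆ convexHull ℝ (K.extremePoints ℝ) := interior_subset

end FiniteDimensional

theorem guessing_probability_continuous_on_interior_general
    {E : Type*} [NormedAddCommGroup E] [NormedSpace ℝ E] [FiniteDimensional ℝ E]
    (K : Set E) (hKc : IsCompact K) (hKconv : Convex ℝ K)
    (f : E → ℝ) (hf : ContinuousOn f K)
    (G : E → ℝ)
    (hG : ∀ x : E, G x =
      sSup {r : ℝ | ∃ (k : ℕ) (e : Fin k → E) (q : Fin k → ℝ),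
        (∀ i, e i ∈ Set.extremePoints ℝ K) ∧ (∀ i, 0 ≤ q i) ∧ ∑ i, q i = 1 ∧
        ∑ i, q i • e i = x ∧ ∑ i, q i * f (e i) = r}) :
    ContinuousOn G (interior K) := by
  obtain rfl : G = fun x => sSup (decompositionValues K f x) := funext hG
  have hf_bdd : BddAbove (f '' K.extremePoints ℝ) :=
    (hKc.bddAbove_image hf).mono (image_mono extremePoints_subset)
  exact (concaveOn_sSup_decompositionValues K f hKconv.interior
    (interior_subset_convexHull_extremePoints hKc hKconv) hf_bdd).continuousOn isOpen_interior

theorem guessing_probability_continuous_on_interior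
    {E : Type*} [NormedAddCommGroup E] [NormedSpace ℝ E] [FiniteDimensional ℝ E]
    (K : Set E) (hKc : IsCompact K) (hKconv : Convex ℝ K)
    (f : E → ℝ) (hf : ContinuousOn f K) (hfconv : ConvexOn ℝ K f)
    (G : E → ℝ)
    (hG : ∀ x : E, G x =
      sSup {r : ℝ | ∃ (k : ℕ) (e : Fin k → E) (q : Fin k → ℝ),
        (∀ i, e i ∈ Set.extremePoints ℝ K) ∧ (∀ i, 0 ≤ q i) ∧ ∑ i, q i = 1 ∧
        ∑ i, q i • e i = x ∧ ∑ i, q i * f (e i) = r}) :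
    ContinuousOn G (interior K) :=
  guessing_probability_continuous_on_interior_general K hKc hKconv f hf G hG
end

section
/- (Proposition 2.) Let K be a compact convex subset of a finite-dimensional real normed vector space E and let f : E → ℝ be continuous on K and convex on K. Define G : K → ℝ by G(x) := sup{ ∑ q_i f(e_i) : k ∈ ℕ, e_i ∈ extremePoints(K), q_i ≥ 0, ∑ q_i = 1, ∑ q_i e_i = x }. Then G is continuous (relative to K) at every point of extremePoints(K). -/
/-!
Write `H` for the convex hull of the graph of `f` over `K`. A value in the set defining `G y` is
the height of a point above `y` in the convex hull of the graph of `f` over the extreme points, so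
it lies in the fibre of `H` over `y`; such values exist for `y ∈ K` by Minkowski's theorem. By
Carathéodory, `H` is compact in finite dimension, and over an extreme point `x` its fibre is
`{f x}`, because a convex combination equal to `x` charges only `x`. Compactness of `H` then forces
the fibres over points near `x`, and hence their suprema, into any neighbourhood of `f x`.

Minkowski's theorem follows by maximising the height over `x` in the convex hull of the graph of a
continuous strictly convex function: splitting a non-extreme atom of the maximiser along a segment
would raise the height.
-/

open Module Set Filter Topology

section Graph

variable {𝕜 E : Type*} [Semiring 𝕜] [PartialOrder 𝕜] [AddCommMonoid E] [Module 𝕜 E]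

theorem image_fst_convexHull_graphOn (S : Set E) (f : E → 𝕜) :
    Prod.fst '' convexHull 𝕜 (S.graphOn f) = convexHull 𝕜 S := by
  simpa using (LinearMap.fst 𝕜 E 𝕜).image_convexHull (S.graphOn f)

end Graph

section Combination

variable {𝕜 E : Type*} [Field 𝕜] [LinearOrder 𝕜] [IsStrictOrderedRing 𝕜] [AddCommGroup E]
  [Module 𝕜 E]

theorem mem_convexHull_iff_exists_fin {s : Set E} {x : E} :
    x ∈ convexHull 𝕜 s ↔ ∃ (k : ℕ) (w : Fin k → 𝕜) (z : Fin k → E), (∀ i, 0 ≤ w i) ∧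
      ∑ i, w i = 1 ∧ (∀ i, z i ∈ s) ∧ ∑ i, w i • z i = x := by
  refine ⟨fun hx => ?_, fun ⟨k, w, z, hw₀, hw₁, hz, hx⟩ =>
    mem_convexHull_of_exists_fintype w z hw₀ hw₁ hz hx⟩
  obtain ⟨ι, _, w, z, hw₀, hw₁, hz, hx⟩ := mem_convexHull_iff_exists_fintype.1 hx
  set e := (Fintype.equivFin ι).symm
  exact ⟨_, w ∘ e, z ∘ e, fun _ => hw₀ _, (e.sum_comp w).trans hw₁, fun _ => hz _,
    (e.sum_comp fun i => w i • z i).trans hx⟩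

theorem mk_mem_convexHull_graphOn_iff {S : Set E} {f : E → 𝕜} {y : E} {r : 𝕜} :
    (y, r) ∈ convexHull 𝕜 (S.graphOn f) ↔
      ∃ (k : ℕ) (e : Fin k → E) (q : Fin k → 𝕜), (∀ i, e i ∈ S) ∧ (∀ i, 0 ≤ q i) ∧
        ∑ i, q i = 1 ∧ ∑ i, q i • e i = y ∧ ∑ i, q i * f (e i) = r := by
  simp only [mem_convexHull_iff_exists_fin, Prod.ext_iff, Prod.fst_sum, Prod.snd_sum,
    Prod.smul_fst, Prod.smul_snd, smul_eq_mul, mem_graphOn]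
  constructor
  · rintro ⟨k, q, z, hq₀, hq₁, hz, hy, hr⟩
    refine ⟨k, fun i => (z i).1, q, fun i => (hz i).1, hq₀, hq₁, hy, ?_⟩
    simpa only [(hz _).2] using hr
  · rintro ⟨k, e, q, he, hq₀, hq₁, hy, hr⟩
    exact ⟨k, q, fun i => (e i, f (e i)), hq₀, hq₁, fun i => ⟨he i, rfl⟩, hy, hr⟩

theorem eq_of_mem_extremePoints_of_sum_smul_eq {ι : Type*} [Fintype ι] {K : Set E} {x : E}
    (hK : Convex 𝕜 K) (hx : x ∈ K.extremePoints 𝕜) {w : ι → 𝕜} {v : ι → E}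
    (hw₀ : ∀ i, 0 ≤ w i) (hw₁ : ∑ i, w i = 1) (hv : ∀ i, v i ∈ K)
    (hwv : ∑ i, w i • v i = x) {i : ι} (hi : w i ≠ 0) : v i = x := by
  classical
  by_contra hvi
  set J := Finset.univ.filter fun j => v j ≠ x
  have hJ : 0 < ∑ j ∈ J, w j :=
    Finset.sum_pos' (fun j _ => hw₀ j) ⟨i, by simpa [J] using hvi, (hw₀ i).lt_of_ne' hi⟩
  have hJx : ∑ j ∈ J, w j • v j = (∑ j ∈ J, w j) • x := by
    have h : ∑ j ∈ J, w j • (v j - x) = 0 := by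
      rw [Finset.sum_filter_of_ne fun j _ hj hvj => by simp [hvj] at hj]
      simp [smul_sub, Finset.sum_sub_distrib, ← Finset.sum_smul, hw₁, hwv]
    simpa [smul_sub, Finset.sum_sub_distrib, Finset.sum_smul, sub_eq_zero] using h
  have hmem : J.centerMass w v ∈ convexHull 𝕜 (K \ {x}) :=
    J.centerMass_mem_convexHull (fun j _ => hw₀ j) hJ fun j hj => ⟨hv j, by simpa [J] using hj⟩
  rw [Finset.centerMass, hJx, inv_smul_smul₀ hJ.ne'] at hmem
  exact ((hK.mem_extremePoints_iff_mem_sdiff_convexHull_sdiff).1 hx).2 hmem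

theorem add_smul_sub_mem_convexHull {ι : Type*} [Fintype ι] {A : Set E} {w : ι → 𝕜}
    {z : ι → E} (hw₀ : ∀ i, 0 ≤ w i) (hw₁ : ∑ i, w i = 1) (hz : ∀ i, z i ∈ convexHull 𝕜 A)
    {q : E} (hq : q ∈ convexHull 𝕜 A) (i : ι) :
    ∑ j, w j • z j + w i • (q - z i) ∈ convexHull 𝕜 A := by
  classical
  have hsum : ∑ j, w j • Function.update z i q j = ∑ j, w j • z j + w i • (q - z i) := by
    have hdiff : ∑ j, w j • (Function.update z i q j - z j) = w i • (q - z i) :=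
      (Finset.sum_eq_single i (fun j _ hj => by simp [hj]) (by simp)).trans (by simp)
    rw [← hdiff, ← Finset.sum_add_distrib]
    simp only [smul_sub, add_sub_cancel]
  rw [← hsum]
  refine (convex_convexHull 𝕜 A).sum_mem (fun j _ => hw₀ j) hw₁ fun j _ => ?_
  rcases eq_or_ne j i with rfl | hj
  · simpa using hq
  · simpa [hj] using hz j

theorem preimage_mk_convexHull_graphOn_subset {K : Set E} {f : E → 𝕜} (hK : Convex 𝕜 K)
    {x : E} (hx : x ∈ K.extremePoints 𝕜) :
    Prod.mk x ⁻¹' convexHull 𝕜 (K.graphOn f) ⊆ {f x} := by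
  intro r hr
  obtain ⟨k, e, q, he, hq₀, hq₁, hx', rfl⟩ := mk_mem_convexHull_graphOn_iff.1 hr
  have hatom : ∀ i, q i * f (e i) = q i * f x := fun i => by
    rcases eq_or_ne (q i) 0 with hi | hi
    · simp [hi]
    · rw [eq_of_mem_extremePoints_of_sum_smul_eq hK hx hq₀ hq₁ he hx' hi]
  simp [hatom, ← Finset.sum_mul, hq₁]

end Combination

section FiniteDimensional

theorem convexHull_eq_biUnion_image_stdSimplex {𝕜 E : Type*} [Field 𝕜] [LinearOrder 𝕜]
    [IsStrictOrderedRing 𝕜] [AddCommGroup E] [Module 𝕜 E] [FiniteDimensional 𝕜 E]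
    (s : Set E) :
    convexHull 𝕜 s = ⋃ k ∈ Finset.range (finrank 𝕜 E + 2),
      (fun p : (Fin k → E) × (Fin k → 𝕜) => ∑ i, p.2 i • p.1 i) ''
        ((univ.pi fun _ => s) ×ˢ stdSimplex 𝕜 (Fin k)) := by
  ext x
  simp only [mem_iUnion, Finset.mem_range, mem_image, mem_prod, mem_univ_pi, Prod.exists]
  constructor
  · intro hx
    obtain ⟨ι, _, z, w, hz, hind, hw₀, hw₁, hx⟩ := eq_pos_convex_span_of_mem_convexHull hx
    have hcard : Fintype.card ι < finrank 𝕜 E + 2 := by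
      have := hind.card_le_finrank_succ
      have := Submodule.finrank_le (vectorSpan 𝕜 (range z))
      omega
    set e := (Fintype.equivFin ι).symm
    exact ⟨_, hcard, z ∘ e, w ∘ e, ⟨fun _ => hz ⟨_, rfl⟩, fun _ => (hw₀ _).le,
      (e.sum_comp w).trans hw₁⟩, (e.sum_comp fun i => w i • z i).trans hx⟩
  · rintro ⟨k, -, z, w, ⟨hz, hw₀, hw₁⟩, rfl⟩
    exact mem_convexHull_of_exists_fintype w z hw₀ hw₁ hz rfl

theorem IsCompact.convexHull {E : Type*} [AddCommGroup E] [Module ℝ E] [TopologicalSpace E]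
    [IsTopologicalAddGroup E] [ContinuousSMul ℝ E] [FiniteDimensional ℝ E] {s : Set E}
    (hs : IsCompact s) : IsCompact (convexHull ℝ s) := by
  rw [convexHull_eq_biUnion_image_stdSimplex]
  exact (Finset.range _).isCompact_biUnion fun k _ =>
    ((isCompact_univ_pi fun _ => hs).prod (isCompact_stdSimplex ℝ (Fin k))).image (by fun_prop)

variable {E : Type*} [NormedAddCommGroup E] [NormedSpace ℝ E] [FiniteDimensional ℝ E]

variable (E) in
theorem exists_continuous_strictConvexOn :
    ∃ φ : E → ℝ, Continuous φ ∧ StrictConvexOn ℝ univ φ := by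
  have hsq : StrictConvexOn ℝ univ fun u : EuclideanSpace ℝ (Fin (finrank ℝ E)) => ‖u‖ ^ 2 :=
    (strongConvexOn_iff_convex.2 (by simpa using convexOn_const (0 : ℝ) convex_univ)).strictConvexOn
      two_pos
  refine ⟨fun v => ‖toEuclidean v‖ ^ 2, by fun_prop, convex_univ,
    fun a _ b _ hab s t hs ht hst => ?_⟩
  simpa using hsq.2 trivial trivial (toEuclidean.injective.ne hab) hs ht hst

theorem convexHull_extremePoints_of_isCompact {K : Set E} (hKc : IsCompact K)
    (hK : Convex ℝ K) : convexHull ℝ (K.extremePoints ℝ) = K := by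
  refine (convexHull_min extremePoints_subset hK).antisymm fun x hx => ?_
  obtain ⟨φ, hφc, hφ⟩ := exists_continuous_strictConvexOn E
  set P := convexHull ℝ (K.graphOn φ)
  have hP : IsCompact (P ∩ Prod.fst ⁻¹' {x}) :=
    (hKc.image (continuous_id.prodMk hφc)).convexHull.inter_right
      (isClosed_singleton.preimage continuous_fst)
  obtain ⟨p, ⟨hpP, hpx⟩, hpmax⟩ := hP.exists_isMaxOn
    ⟨(x, φ x), subset_convexHull ℝ _ ⟨x, hx, rfl⟩, rfl⟩ continuous_snd.continuousOn
  obtain ⟨ι, _, z, w, hz, -, hw₀, hw₁, hwz⟩ := eq_pos_convex_span_of_mem_convexHull hpP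
  have hzP : ∀ i, z i ∈ P := fun i => subset_convexHull ℝ _ (hz ⟨i, rfl⟩)
  have hext : ∀ i, (z i).1 ∈ K.extremePoints ℝ := by
    intro i
    obtain ⟨hzK, hzφ⟩ := mem_graphOn.1 (hz ⟨i, rfl⟩)
    refine mem_extremePoints_iff_left.2 ⟨hzK, fun a ha b hb ⟨s, t, hs, ht, hst, hab⟩ => ?_⟩
    by_contra hne
    have hab' : a ≠ b := by
      rintro rfl
      exact hne (by rw [← hab, ← add_smul, hst, one_smul])
    set q := s • (a, φ a) + t • (b, φ b)
    have hq : q ∈ P := convex_convexHull ℝ _ (subset_convexHull ℝ (K.graphOn φ) ⟨a, ha, rfl⟩)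
      (subset_convexHull ℝ (K.graphOn φ) ⟨b, hb, rfl⟩) hs.le ht.le hst
    have hmem := add_smul_sub_mem_convexHull (fun i => (hw₀ i).le) hw₁ hzP hq i
    rw [hwz] at hmem
    have hle := hpmax ⟨hmem, by simp [q, hab, show p.1 = x from hpx]⟩
    have hlt := hφ.2 trivial trivial hab' hs ht hst
    simp only [mem_ofPred_eq, Prod.snd_add, Prod.smul_snd, Prod.snd_sub, smul_eq_mul, q,
      ← hzφ, ← hab] at hle hlt
    linarith [mul_pos (hw₀ i) (sub_pos.2 hlt)]
  rw [← hpx, ← hwz, Prod.fst_sum]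
  exact (convex_convexHull ℝ _).sum_mem (fun i _ => (hw₀ i).le) hw₁ fun i _ =>
    subset_convexHull ℝ _ (hext i)

end FiniteDimensional

section Fiber

variable {X : Type*} [TopologicalSpace X] [T2Space X]

theorem IsCompact.eventually_preimage_mk_subset {Y : Type*} [TopologicalSpace Y]
    {H : Set (X × Y)} (hH : IsCompact H) {V : Set Y} (hV : IsOpen V) {x : X}
    (hx : Prod.mk x ⁻¹' H ⊆ V) : ∀ᶠ x' in 𝓝 x, Prod.mk x' ⁻¹' H ⊆ V := by
  have hB : IsCompact (Prod.fst '' (H ∩ Prod.snd ⁻¹' Vᶜ)) :=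
    (hH.inter_right (hV.isClosed_compl.preimage continuous_snd)).image continuous_fst
  have hxB : x ∉ Prod.fst '' (H ∩ Prod.snd ⁻¹' Vᶜ) := by
    rintro ⟨⟨_, y⟩, ⟨hy, hyV⟩, rfl⟩
    exact hyV (hx hy)
  filter_upwards [hB.isClosed.isOpen_compl.mem_nhds hxB] with x' hx' y hy
  by_contra hyV
  exact hx' ⟨(x', y), ⟨hy, hyV⟩, rfl⟩

theorem continuousWithinAt_sSup_preimage_mk {H H' : Set (X × ℝ)} (hH : IsCompact H)
    (hH' : H' ⊆ H) {s : Set X} (hne : ∀ y ∈ s, (Prod.mk y ⁻¹' H').Nonempty) {x : X}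
    (hx : x ∈ s) {c : ℝ} (hxc : Prod.mk x ⁻¹' H ⊆ {c}) :
    ContinuousWithinAt (fun y => sSup (Prod.mk y ⁻¹' H')) s x := by
  have hcx : sSup (Prod.mk x ⁻¹' H') = c := by
    rw [(hne x hx).subset_singleton_iff.1 ((preimage_mono hH').trans hxc), csSup_singleton]
  rw [ContinuousWithinAt, hcx, Metric.tendsto_nhds]
  intro ε hε
  filter_upwards [nhdsWithin_le_nhds (hH.eventually_preimage_mk_subset
    (isOpen_Ioo (a := c - ε / 2) (b := c + ε / 2)) (hxc.trans fun r hr => by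
      rw [mem_singleton_iff.1 hr]; constructor <;> linarith)),
    self_mem_nhdsWithin] with y hy hys
  obtain ⟨r, hr⟩ := hne y hys
  have hsub : Prod.mk y ⁻¹' H' ⊆ Ioo (c - ε / 2) (c + ε / 2) := (preimage_mono hH').trans hy
  have hle : sSup (Prod.mk y ⁻¹' H') ≤ c + ε / 2 := csSup_le ⟨r, hr⟩ fun r hr => (hsub hr).2.le
  have hge : c - ε / 2 ≤ sSup (Prod.mk y ⁻¹' H') :=
    (hsub hr).1.le.trans (le_csSup ⟨_, fun r hr => (hsub hr).2.le⟩ hr)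
  rw [Real.dist_eq, abs_sub_lt_iff]
  constructor <;> linarith

end Fiber

theorem guessing_probability_continuous_at_extreme_points_general
    {E : Type*} [NormedAddCommGroup E] [NormedSpace ℝ E] [FiniteDimensional ℝ E]
    (K : Set E) (hKc : IsCompact K) (hKconv : Convex ℝ K)
    (f : E → ℝ) (hf : ContinuousOn f K)
    (G : E → ℝ)
    (hG : ∀ x : E, G x =
      sSup {r : ℝ | ∃ (k : ℕ) (e : Fin k → E) (q : Fin k → ℝ),
        (∀ i, e i ∈ Set.extremePoints ℝ K) ∧ (∀ i, 0 ≤ q i) ∧ ∑ i, q i = 1 ∧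
        ∑ i, q i • e i = x ∧ ∑ i, q i * f (e i) = r}) :
    ∀ x ∈ Set.extremePoints ℝ K, ContinuousWithinAt G K x := by
  intro x hx
  have hG' : G = fun y => sSup (Prod.mk y ⁻¹' convexHull ℝ ((K.extremePoints ℝ).graphOn f)) := by
    ext y
    rw [hG]
    congr 1
    ext r
    exact mk_mem_convexHull_graphOn_iff.symm
  rw [hG']
  refine continuousWithinAt_sSup_preimage_mk
    (hKc.image_of_continuousOn (continuousOn_id.prodMk hf)).convexHull
    (convexHull_mono (image_mono extremePoints_subset)) (fun y hy => ?_) hx.1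
    (preimage_mk_convexHull_graphOn_subset hKconv hx)
  rw [← convexHull_extremePoints_of_isCompact hKc hKconv,
    ← image_fst_convexHull_graphOn _ f] at hy
  obtain ⟨⟨_, r⟩, hr, rfl⟩ := hy
  exact ⟨r, hr⟩

theorem guessing_probability_continuous_at_extreme_points
    {E : Type*} [NormedAddCommGroup E] [NormedSpace ℝ E] [FiniteDimensional ℝ E]
    (K : Set E) (hKc : IsCompact K) (hKconv : Convex ℝ K)
    (f : E → ℝ) (hf : ContinuousOn f K) (hfconv : ConvexOn ℝ K f)
    (G : E → ℝ)
    (hG : ∀ x : E, G x =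
      sSup {r : ℝ | ∃ (k : ℕ) (e : Fin k → E) (q : Fin k → ℝ),
        (∀ i, e i ∈ Set.extremePoints ℝ K) ∧ (∀ i, 0 ≤ q i) ∧ ∑ i, q i = 1 ∧
        ∑ i, q i • e i = x ∧ ∑ i, q i * f (e i) = r}) :
    ∀ x ∈ Set.extremePoints ℝ K, ContinuousWithinAt G K x :=
  guessing_probability_continuous_at_extreme_points_general K hKc hKconv f hf G hG
end

section
/- (Arbitrarily close to n random bits for n sequential measurements.) Fix n ∈ ℕ. For every ε > 0 there exists δ > 0 with the following property. Let ι be a finite index type, let q : ι → ℝ with q_λ ≥ 0 and ∑_λ q_λ = 1, and for each λ let P_λ : (Fin n → Bool) → ℝ be a probability distribution on length-n bit strings (P_λ(b⃗) ≥ 0 and ∑_{b⃗} P_λ(b⃗) = 1). For m ≤ n and a prefix w : Fin m → Bool let Q_λ(w) := ∑ over all b⃗ : Fin n → Bool extending w of P_λ(b⃗) denote the marginal probability of the prefix w. Suppose that for every m < n and every prefix w : Fin m → Bool, ∑_λ q_λ · max(Q_λ(w⌢true), Q_λ(w⌢false)) ≤ (1/2 + δ) · ∑_λ q_λ · Q_λ(w),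 where w⌢b denotes the length-(m+1) prefix extending w by the bit b. Then ∑_λ q_λ · max_{b⃗ : Fin n → Bool} P_λ(b⃗) ≤ 2^{−n} + ε. -/
open scoped BigOperators

/-- The marginal probability that the first `m` of the `n` sequential binary outcomes,
distributed according to `P`, agree with the prefix `w`. -/
noncomputable def prefMarg (n : ℕ) (P : (Fin n → Bool) → ℝ) (m : ℕ) (hm : m ≤ n)
    (w : Fin m → Bool) : ℝ :=
  ∑ b : Fin n → Bool, if ∀ i : Fin m, b (Fin.castLE hm i) = w i then P b else 0

lemma snoc_cond (n m : ℕ) (hm : m < n) (w : Fin m → Bool) (c : Bool) (b : Fin n → Bool) :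
    (∀ i : Fin (m + 1), b (Fin.castLE hm i) = (Fin.snoc w c : Fin (m + 1) → Bool) i) ↔
      ((∀ i : Fin m, b (Fin.castLE hm.le i) = w i) ∧ b ⟨m, hm⟩ = c) := by
  constructor
  · intro h
    refine ⟨fun i => ?_, ?_⟩
    · have := h i.castSucc
      rwa [Fin.snoc_castSucc] at this
    · have := h (Fin.last m)
      rwa [Fin.snoc_last] at this
  · rintro ⟨h1, h2⟩ i
    induction i using Fin.lastCases with
    | last => rw [Fin.snoc_last]; exact h2
    | cast j => rw [Fin.snoc_castSucc]; exact h1 j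

lemma prefMarg_split (n : ℕ) (P : (Fin n → Bool) → ℝ) (m : ℕ) (hm : m < n)
    (w : Fin m → Bool) :
    prefMarg n P m hm.le w =
      prefMarg n P (m + 1) hm (Fin.snoc w true) + prefMarg n P (m + 1) hm (Fin.snoc w false) := by
  unfold prefMarg
  rw [← Finset.sum_add_distrib]
  refine Finset.sum_congr rfl fun b _ => ?_
  by_cases hb : ∀ i : Fin m, b (Fin.castLE hm.le i) = w i
  · rw [if_pos hb]
    cases hc : b ⟨m, hm⟩
    · rw [if_neg (fun H => by simpa [hc] using ((snoc_cond n m hm w true b).mp H).2),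
        if_pos ((snoc_cond n m hm w false b).mpr ⟨hb, hc⟩)]
      ring
    · rw [if_pos ((snoc_cond n m hm w true b).mpr ⟨hb, hc⟩),
        if_neg (fun H => by simpa [hc] using ((snoc_cond n m hm w false b).mp H).2)]
      ring
  · rw [if_neg hb, if_neg (fun H => hb ((snoc_cond n m hm w true b).mp H).1),
      if_neg (fun H => hb ((snoc_cond n m hm w false b).mp H).1)]
    ring

lemma prefMarg_sum (n : ℕ) (P : (Fin n → Bool) → ℝ) (m : ℕ) (hm : m ≤ n) :
    ∑ w : Fin m → Bool, prefMarg n P m hm w = ∑ b, P b := by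
  unfold prefMarg
  rw [Finset.sum_comm]
  refine Finset.sum_congr rfl fun b _ => ?_
  have hiff : ∀ w : Fin m → Bool,
      (∀ i : Fin m, b (Fin.castLE hm i) = w i) ↔ w = fun i => b (Fin.castLE hm i) := by
    intro w
    constructor
    · intro h; funext i; exact (h i).symm
    · intro h i; rw [h]
  simp only [hiff]
  rw [Finset.sum_ite_eq' Finset.univ (fun i => b (Fin.castLE hm i)) (fun _ => P b)]
  simp

lemma prefMarg_full (n : ℕ) (P : (Fin n → Bool) → ℝ) (w : Fin n → Bool) :
    prefMarg n P n le_rfl w = P w := by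
  unfold prefMarg
  have hiff : ∀ b : Fin n → Bool,
      (∀ i : Fin n, b (Fin.castLE le_rfl i) = w i) ↔ b = w := by
    intro b
    constructor
    · intro h; funext i; exact h i
    · intro h i; rw [h]; rfl
  simp only [hiff]
  rw [Finset.sum_ite_eq' Finset.univ w P]
  simp

/-- Arbitrarily close to `n` random bits from `n` sequential measurements: if at every step,
conditioned on any prefix of previous outcomes, the decomposition-weighted probability of
guessing the next binary outcome is at most `1/2 + δ`, then the probability of guessing the
whole sequence of `n` outcomes is at most `2⁻ⁿ + ε`. -/
theorem sequential_guessing_probability_close_to_n_bits (n : ℕ) :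
    ∀ ε > (0 : ℝ), ∃ δ > (0 : ℝ),
      ∀ (ι : Type) (_ : Fintype ι) (q : ι → ℝ) (P : ι → (Fin n → Bool) → ℝ),
        (∀ l, 0 ≤ q l) → (∑ l, q l = 1) →
        (∀ l b, 0 ≤ P l b) → (∀ l, ∑ b, P l b = 1) →
        (∀ (m : ℕ) (hm : m < n) (w : Fin m → Bool),
          ∑ l, q l * max (prefMarg n (P l) (m + 1) hm (Fin.snoc w true))
              (prefMarg n (P l) (m + 1) hm (Fin.snoc w false))
            ≤ (1 / 2 + δ) * ∑ l, q l * prefMarg n (P l) m hm.le w) →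
        ∑ l, q l * (⨆ b : Fin n → Bool, P l b) ≤ (2 : ℝ) ^ (-(n : ℤ)) + ε := by
  intro ε hε
  refine ⟨ε / 2, by positivity, ?_⟩
  intro ι _ q P hq hq1 hP hP1 hstep
  -- the weighted sup over length-m prefixes
  set g : ∀ m, m ≤ n → ℝ := fun m hm =>
    ∑ l, q l * Finset.univ.sup' Finset.univ_nonempty
      (fun w : Fin m → Bool => prefMarg n (P l) m hm w) with hg
  -- one-step contraction
  have step : ∀ (m : ℕ) (hm : m < n),
      g (m + 1) hm ≤ g m hm.le / 2 + ε / 2 := by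
    intro m hm
    set S : ι → ℝ := fun l => ∑ w : Fin m → Bool,
      (max (prefMarg n (P l) (m + 1) hm (Fin.snoc w true))
          (prefMarg n (P l) (m + 1) hm (Fin.snoc w false))
        - prefMarg n (P l) m hm.le w / 2) with hS
    have hterm : ∀ l (w : Fin m → Bool),
        0 ≤ max (prefMarg n (P l) (m + 1) hm (Fin.snoc w true))
            (prefMarg n (P l) (m + 1) hm (Fin.snoc w false))
          - prefMarg n (P l) m hm.le w / 2 := by
      intro l w
      rw [prefMarg_split n (P l) m hm w]
      have h1 := le_max_left (prefMarg n (P l) (m + 1) hm (Fin.snoc w true))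
        (prefMarg n (P l) (m + 1) hm (Fin.snoc w false))
      have h2 := le_max_right (prefMarg n (P l) (m + 1) hm (Fin.snoc w true))
        (prefMarg n (P l) (m + 1) hm (Fin.snoc w false))
      linarith
    have hl : ∀ l,
        Finset.univ.sup' Finset.univ_nonempty
            (fun w : Fin (m + 1) → Bool => prefMarg n (P l) (m + 1) hm w)
          ≤ Finset.univ.sup' Finset.univ_nonempty
              (fun w : Fin m → Bool => prefMarg n (P l) m hm.le w) / 2 + S l := by
      intro l
      apply Finset.sup'_le
      intro w' _
      set w : Fin m → Bool := Fin.init w' with hw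
      have hsplit : Fin.snoc w (w' (Fin.last m)) = w' := Fin.snoc_init_self w'
      have h1 : prefMarg n (P l) (m + 1) hm w'
          ≤ max (prefMarg n (P l) (m + 1) hm (Fin.snoc w true))
              (prefMarg n (P l) (m + 1) hm (Fin.snoc w false)) := by
        rw [← hsplit]
        cases w' (Fin.last m)
        · exact le_max_right _ _
        · exact le_max_left _ _
      have h2 : max (prefMarg n (P l) (m + 1) hm (Fin.snoc w true))
            (prefMarg n (P l) (m + 1) hm (Fin.snoc w false))
          - prefMarg n (P l) m hm.le w / 2 ≤ S l :=
        Finset.single_le_sum (fun w _ => hterm l w) (Finset.mem_univ w)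
      have h3 : prefMarg n (P l) m hm.le w
          ≤ Finset.univ.sup' Finset.univ_nonempty
              (fun w : Fin m → Bool => prefMarg n (P l) m hm.le w) :=
        Finset.le_sup' _ (Finset.mem_univ w)
      linarith
    have hSsum : ∑ l, q l * S l ≤ ε / 2 := by
      have hswap : ∑ l, q l * S l = ∑ w : Fin m → Bool,
          ((∑ l, q l * max (prefMarg n (P l) (m + 1) hm (Fin.snoc w true))
              (prefMarg n (P l) (m + 1) hm (Fin.snoc w false)))
            - (∑ l, q l * prefMarg n (P l) m hm.le w) / 2) := by
        simp only [hS, Finset.mul_sum, mul_sub]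
        rw [Finset.sum_comm]
        refine Finset.sum_congr rfl fun w _ => ?_
        rw [Finset.sum_sub_distrib, Finset.sum_div]
        congr 1
        refine Finset.sum_congr rfl fun l _ => by ring
      rw [hswap]
      have hstep' : ∀ w : Fin m → Bool,
          (∑ l, q l * max (prefMarg n (P l) (m + 1) hm (Fin.snoc w true))
              (prefMarg n (P l) (m + 1) hm (Fin.snoc w false)))
            - (∑ l, q l * prefMarg n (P l) m hm.le w) / 2
            ≤ ε / 2 * ∑ l, q l * prefMarg n (P l) m hm.le w := by
        intro w
        have := hstep m hm w
        linarith
      calc ∑ w : Fin m → Bool, ((∑ l, q l * max (prefMarg n (P l) (m + 1) hm (Fin.snoc w true))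
              (prefMarg n (P l) (m + 1) hm (Fin.snoc w false)))
            - (∑ l, q l * prefMarg n (P l) m hm.le w) / 2)
          ≤ ∑ w : Fin m → Bool, ε / 2 * ∑ l, q l * prefMarg n (P l) m hm.le w :=
            Finset.sum_le_sum fun w _ => hstep' w
        _ = ε / 2 := by
            rw [← Finset.mul_sum, Finset.sum_comm]
            have : ∀ l, ∑ w : Fin m → Bool, q l * prefMarg n (P l) m hm.le w = q l := by
              intro l
              rw [← Finset.mul_sum, prefMarg_sum n (P l) m hm.le, hP1 l, mul_one]
            simp only [this]
            rw [hq1, mul_one]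
    calc g (m + 1) hm
        ≤ ∑ l, q l * (Finset.univ.sup' Finset.univ_nonempty
              (fun w : Fin m → Bool => prefMarg n (P l) m hm.le w) / 2 + S l) :=
          Finset.sum_le_sum fun l _ => mul_le_mul_of_nonneg_left (hl l) (hq l)
      _ = g m hm.le / 2 + ∑ l, q l * S l := by
          rw [hg]
          rw [Finset.sum_div, ← Finset.sum_add_distrib]
          refine Finset.sum_congr rfl fun l _ => by ring
      _ ≤ g m hm.le / 2 + ε / 2 := by linarith
  -- induction: g m ≤ 2^(-m) + ε
  have bound : ∀ (m : ℕ) (hm : m ≤ n), g m hm ≤ (2 : ℝ) ^ (-(m : ℤ)) + ε := by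
    intro m
    induction m with
    | zero =>
        intro hm
        have : g 0 hm = 1 := by
          rw [hg]
          have : ∀ l, Finset.univ.sup' Finset.univ_nonempty
              (fun w : Fin 0 → Bool => prefMarg n (P l) 0 hm w) = 1 := by
            intro l
            have hval : ∀ w : Fin 0 → Bool, prefMarg n (P l) 0 hm w = 1 := by
              intro w
              unfold prefMarg
              simp only [IsEmpty.forall_iff, if_true]
              exact hP1 l
            apply le_antisymm
            · exact Finset.sup'_le _ _ fun w _ => (hval w).le
            · exact le_trans (hval (fun i => true)).ge (Finset.le_sup' _ (Finset.mem_univ _))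
          simp only [this, mul_one, hq1]
        rw [this]
        simp
        linarith
    | succ m ih =>
        intro hm
        have hmn : m < n := hm
        have h1 := step m hmn
        have h2 := ih hmn.le
        have hpow : ((2 : ℝ) ^ (-(m : ℤ)) + ε) / 2 + ε / 2
            = (2 : ℝ) ^ (-((m : ℤ) + 1)) + ε := by
          rw [neg_add, zpow_add₀ (by norm_num : (2 : ℝ) ≠ 0), zpow_neg_one]
          ring
        have : g (m + 1) hm ≤ ((2 : ℝ) ^ (-(m : ℤ)) + ε) / 2 + ε / 2 := by
          calc g (m + 1) hm ≤ g m hmn.le / 2 + ε / 2 := h1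
            _ ≤ ((2 : ℝ) ^ (-(m : ℤ)) + ε) / 2 + ε / 2 := by linarith
        rw [hpow] at this
        have hcast : (-((m + 1 : ℕ) : ℤ)) = -((m : ℤ) + 1) := by push_cast; ring
        rw [hcast]
        exact this
  -- conclusion
  have hfinal : ∑ l, q l * (⨆ b : Fin n → Bool, P l b) ≤ g n le_rfl := by
    rw [hg]
    refine Finset.sum_le_sum fun l _ => mul_le_mul_of_nonneg_left ?_ (hq l)
    refine ciSup_le fun b => ?_
    have := Finset.le_sup' (fun w : Fin n → Bool => prefMarg n (P l) n le_rfl w)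
      (Finset.mem_univ b)
    rwa [prefMarg_full n (P l) b] at this
  exact le_trans hfinal (bound n le_rfl)
end
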